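/- Let (η_i)_{i≥0} and (θ_j)_{j≥0} be sequences of pairwise distinct complex numbers, N ≥ 1 with associated integers d, m, and Ω_N, 𝒫_N as in the bidimensional intertwining setting. If (η_p,θ_q) ∈ Ω_N with 0 ≤ p+q ≤ d−2, 0 ≤ p ≤ m−1 and 0 ≤ q ≤ d−m−1, then for all (z,w) ∈ ℂ²: l^{(N)}_{(η_p,θ_q)}(z,w) = ∏_{i=0}^{p−1} (z−η_i)/(η_p−η_i) ∏_{j=0,j≠q}^{d−p} (w−θ_j)/(θ_q−θ_j) − ∏_{i=0}^{p−1} (z−η_i)/(η_p−η_i) ∏_{j=0,j≠q}^{d−p−1} (w−θ_j)/(θ_q−θ_j) + ∏_{i=0,i≠p}^{p+1} (z−η_i)/(η_p−η_i) ∏_{j=0,j≠q}^{d−p−1} (w−θ_j)/(θ_q−θ_j) + Σ_{r=1}^{m−p−1} [∏_{i=0,i≠p}^{p+r+1} (z−η_i)/(η_p−η_i) ∏_{j=0,j≠q}^{d−p−r−1} (w−θ_j)/(θ_q−θ_j) − ∏_{i=0,i≠p}^{p+r} (z−η_i)/(η_p−η_i) ∏_{j=0,j≠q}^{d−p−r−1}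 (w−θ_j)/(θ_q−θ_j)] + Σ_{r=m−p}^{d−p−q−2} [∏_{i=0,i≠p}^{p+r+1} (z−η_i)/(η_p−η_i) ∏_{j=0,j≠q}^{d−p−r−2} (w−θ_j)/(θ_q−θ_j) − ∏_{i=0,i≠p}^{p+r} (z−η_i)/(η_p−η_i) ∏_{j=0,j≠q}^{d−p−r−2} (w−θ_j)/(θ_q−θ_j)]. -/

import Mathlib

/-!
The right-hand side is a combination of products `A_s(z) B_t(w)`, where `A_s` is the univariate
Lagrange basis polynomial of `η_p` on the nodes `η_0, …, η_{s-1}` and `B_t` that of `θ_q` on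
`θ_0, …, θ_{t-1}`. In every product `(s - 1, t - 1)` is an admissible index, so the formula lies in
`𝒫_N`. At a node `(η_k, θ_l)` of `Ω_N` each product either has `k < s`, where consecutive
`A`-terms agree, or `l < t`, where `B_t(θ_l) = δ_{lq}`; the formula then telescopes to
`δ_{lq} A_{d-q}(η_k) = δ_{kp} δ_{lq}`.

Uniqueness: the index set of `Ω_N` is a lower set, so `𝒫_N` is spanned by the Newton products
`∏_{i<k} (z - η_i) ∏_{j<l} (w - θ_j)` over it. Such a product vanishes at the node of any index
not above `(k, l)`, so evaluating a combination at the node of a minimal index of its support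
isolates that coefficient.
-/

open Finset

/-- The index set of both `Ω_N` and the monomials spanning `𝒫_N` in the bidimensional
intertwining setting with parameters `d`, `m`: pairs `(k,l)` with `k+l < d`, or
`k+l = d` and `k ≤ m`. -/
def BidIdx (d m : ℕ) (p : ℕ × ℕ) : Prop :=
  p.1 + p.2 < d ∨ (p.1 + p.2 = d ∧ p.1 ≤ m)

/-- The polynomial space `𝒫_N` (as a space of functions on `ℂ²`): the span of the
monomials `z^k w^l` with `(k,l)` in the index set. -/
noncomputable def PolySpace (d m : ℕ) : Submodule ℂ ((ℂ × ℂ) → ℂ) :=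
  Submodule.span ℂ
    {f | ∃ k l : ℕ, BidIdx d m (k, l) ∧ f = fun p : ℂ × ℂ => p.1 ^ k * p.2 ^ l}

/-- `L` is the fundamental Lagrange interpolation polynomial (FLIP) of the point
`(η_p, θ_q)` of `Ω_N`: it belongs to `𝒫_N`, equals `1` at `(η_p, θ_q)` and `0` at
every other point of `Ω_N`. -/
def IsFLIP (η θ : ℕ → ℂ) (d m : ℕ) (p q : ℕ) (L : (ℂ × ℂ) → ℂ) : Prop :=
  L ∈ PolySpace d m ∧ L (η p, θ q) = 1 ∧
    ∀ k l : ℕ, BidIdx d m (k, l) → (k, l) ≠ (p, q) → L (η k, θ l) = 0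

open Polynomial

namespace BivariateInterpolation

section NewtonBasis

variable {R : Type*} [CommRing R]

noncomputable def evalMul : R[X] →ₗ[R] R[X] →ₗ[R] (R × R → R) :=
  LinearMap.mk₂ R (fun P Q zw => P.eval zw.1 * Q.eval zw.2)
    (fun _ _ _ => funext fun _ => by simp [add_mul])
    (fun _ _ _ => funext fun _ => by simp [mul_assoc])
    (fun _ _ _ => funext fun _ => by simp [mul_add])
    (fun _ _ _ => funext fun _ => by simp [mul_left_comm])

@[simp]
lemma evalMul_apply (P Q : R[X]) (zw : R × R) : evalMul P Q zw = P.eval zw.1 * Q.eval zw.2 :=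
  rfl

lemma evalMul_mem_span_image {u v : ℕ → R[X]} {S : Set (ℕ × ℕ)} (hS : IsLowerSet S)
    {a b : ℕ} (hab : (a, b) ∈ S) {P Q : R[X]}
    (hP : P ∈ Submodule.span R (u '' Set.Iic a)) (hQ : Q ∈ Submodule.span R (v '' Set.Iic b)) :
    evalMul P Q ∈ Submodule.span R ((fun x => evalMul (u x.1) (v x.2)) '' S) := by
  have h := Submodule.apply_mem_map₂ evalMul hP hQ
  rw [Submodule.map₂_span_span] at h
  refine Submodule.span_mono ?_ h
  rintro _ ⟨_, ⟨i, hi, rfl⟩, _, ⟨j, hj, rfl⟩, rfl⟩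
  exact ⟨(i, j), hS (Prod.mk_le_mk.2 ⟨hi, hj⟩) hab, rfl⟩

lemma mem_span_X_pow_of_natDegree_le {P : R[X]} {n : ℕ} (hP : P.natDegree ≤ n) :
    P ∈ Submodule.span R ((X ^ ·) '' Set.Iic n) := by
  classical
  have h : P ∈ degreeLE R n := mem_degreeLE.2 (natDegree_le_iff_degree_le.1 hP)
  rwa [degreeLE_eq_span_X_pow, Finset.coe_image, coe_range, Set.Iio_add_one_eq_Iic] at h

lemma mem_span_nodal_of_natDegree_le [Nontrivial R] (v : ℕ → R) {P : R[X]} {n : ℕ}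
    (hP : P.natDegree ≤ n) :
    P ∈ Submodule.span R ((fun j => Lagrange.nodal (range j) v) '' Set.Iic n) := by
  induction n generalizing P with
  | zero =>
    rw [eq_C_of_natDegree_le_zero hP, ← mul_one (C _), ← smul_eq_C_mul]
    refine Submodule.smul_mem _ _ (Submodule.subset_span ⟨0, Set.self_mem_Iic, ?_⟩)
    simp [Lagrange.nodal_empty]
  | succ n ih =>
    set N := Lagrange.nodal (range (n + 1)) v
    have hN : N.Monic := Lagrange.nodal_monic
    have hNdeg : N.natDegree = n + 1 := by simp [N, Lagrange.natDegree_nodal]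
    have hNlead : N.coeff (n + 1) = 1 := hNdeg ▸ hN.coeff_natDegree
    have hlower : (P - P.coeff (n + 1) • N).natDegree ≤ n := by
      refine natDegree_le_iff_coeff_eq_zero.2 fun i hi => ?_
      rw [coeff_sub, coeff_smul, smul_eq_mul]
      rcases (Nat.succ_le_of_lt hi).eq_or_lt with rfl | hi'
      · rw [hNlead, mul_one, sub_self]
      · rw [coeff_eq_zero_of_natDegree_lt (hP.trans_lt hi'),
          coeff_eq_zero_of_natDegree_lt (hNdeg.trans_lt hi'), mul_zero, sub_zero]
    rw [← sub_add_cancel P (P.coeff (n + 1) • N)]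
    exact Submodule.add_mem _
      (Submodule.span_mono (Set.image_mono (Set.Iic_subset_Iic.2 n.le_succ)) (ih hlower))
      (Submodule.smul_mem _ _ (Submodule.subset_span ⟨n + 1, Set.self_mem_Iic, rfl⟩))

noncomputable def newtonFun (η θ : ℕ → R) (x : ℕ × ℕ) : R × R → R :=
  evalMul (Lagrange.nodal (range x.1) η) (Lagrange.nodal (range x.2) θ)

lemma span_monomial_le_span_newtonFun [Nontrivial R] (η θ : ℕ → R) {S : Set (ℕ × ℕ)}
    (hS : IsLowerSet S) :
    Submodule.span R ((fun x => evalMul (X ^ x.1) (X ^ x.2)) '' S) ≤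
      Submodule.span R (newtonFun η θ '' S) := by
  rw [Submodule.span_le]
  rintro _ ⟨⟨k, l⟩, hkl, rfl⟩
  exact evalMul_mem_span_image (u := fun j => Lagrange.nodal (range j) η)
    (v := fun j => Lagrange.nodal (range j) θ) hS hkl
    (mem_span_nodal_of_natDegree_le η (natDegree_X_pow_le k))
    (mem_span_nodal_of_natDegree_le θ (natDegree_X_pow_le l))

lemma newtonFun_apply_node_of_not_le (η θ : ℕ → R) {x y : ℕ × ℕ} (h : ¬y ≤ x) :
    newtonFun η θ y (η x.1, θ x.2) = 0 := by
  rcases not_and_or.1 (Prod.mk_le_mk.not.1 h) with h | h <;>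
    simp [newtonFun, Lagrange.eval_nodal_at_node (mem_range.2 (not_le.1 h))]

lemma newtonFun_apply_node_self_ne_zero [IsDomain R] {η θ : ℕ → R} (hη : η.Injective)
    (hθ : θ.Injective) (x : ℕ × ℕ) : newtonFun η θ x (η x.1, θ x.2) ≠ 0 := by
  refine mul_ne_zero (Lagrange.eval_nodal_not_at_node fun i hi h => ?_)
    (Lagrange.eval_nodal_not_at_node fun i hi h => ?_)
  · exact (mem_range.1 hi).ne' (hη h)
  · exact (mem_range.1 hi).ne' (hθ h)

lemma eq_zero_of_mem_span_newtonFun [IsDomain R] {η θ : ℕ → R} (hη : η.Injective)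
    (hθ : θ.Injective) {S : Set (ℕ × ℕ)} {f : R × R → R}
    (hf : f ∈ Submodule.span R (newtonFun η θ '' S)) (h0 : ∀ x ∈ S, f (η x.1, θ x.2) = 0) :
    f = 0 := by
  obtain ⟨c, hcS, rfl⟩ := (Finsupp.mem_span_image_iff_linearCombination R).1 hf
  suffices c = 0 by simp [this]
  by_contra hc
  obtain ⟨x, hx⟩ := Finset.exists_minimal (Finsupp.support_nonempty_iff.2 hc)
  have hval : Finsupp.linearCombination R (newtonFun η θ) c (η x.1, θ x.2) =
      c x * newtonFun η θ x (η x.1, θ x.2) := by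
    rw [Finsupp.linearCombination_apply, Finsupp.sum, Finset.sum_apply, Finset.sum_eq_single x]
    · rfl
    · intro y hy hyx
      by_cases hle : y ≤ x
      · exact absurd (hx.eq_of_le hy hle) hyx
      · simp [newtonFun_apply_node_of_not_le η θ hle]
    · exact fun hx' => absurd hx.prop hx'
  have hzero := h0 x (hcS hx.prop)
  rw [hval] at hzero
  exact Finsupp.mem_support_iff.1 hx.prop
    ((mul_eq_zero.1 hzero).resolve_right (newtonFun_apply_node_self_ne_zero hη hθ x))

end NewtonBasis

section LagrangeBasis

variable {K : Type*} [Field K]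

lemma eval_basis_eq_prod {ι : Type*} [DecidableEq ι] (s : Finset ι) (v : ι → K) (i : ι)
    (x : K) :
    (Lagrange.basis s v i).eval x = ∏ j ∈ s.erase i, (x - v j) / (v i - v j) := by
  simp only [Lagrange.basis, Lagrange.basisDivisor, eval_prod, eval_mul, eval_C, eval_sub, eval_X,
    div_eq_mul_inv, mul_comm]

lemma eval_basis_range_of_lt {η : ℕ → K} (hη : η.Injective) {p s k : ℕ} (hp : p < s)
    (hk : k < s) :
    (Lagrange.basis (range s) η p).eval (η k) = if k = p then 1 else 0 := by
  split_ifs with h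
  · subst h
    exact Lagrange.eval_basis_self hη.injOn (mem_range.2 hp)
  · exact Lagrange.eval_basis_of_ne (Ne.symm h) (mem_range.2 hk)

noncomputable def lagrangeProd (η θ : ℕ → K) (p q s t : ℕ) : K × K → K :=
  evalMul (Lagrange.basis (range s) η p) (Lagrange.basis (range t) θ q)

end LagrangeBasis

section FlipSum

variable {M : Type*} [AddCommGroup M]

/-- The formula of the theorem with `F s t` in place of the product of the Lagrange factors over
`i < s, i ≠ p` and `j < t, j ≠ q`; its product over `i < p` is the case `s = p + 1`. -/
def flipSum (F : ℕ → ℕ → M) (d m p q : ℕ) : M :=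
  F (p + 1) (d - p + 1) - F (p + 1) (d - p) + F (p + 2) (d - p)
    + ∑ r ∈ Icc 1 (m - p - 1), (F (p + r + 2) (d - p - r) - F (p + r + 1) (d - p - r))
    + ∑ r ∈ Icc (m - p) (d - p - q - 2),
        (F (p + r + 2) (d - p - r - 1) - F (p + r + 1) (d - p - r - 1))

lemma flipSum_apply {X : Type*} (F : ℕ → ℕ → X → M) (d m p q : ℕ) (x : X) :
    flipSum F d m p q x = flipSum (fun s t => F s t x) d m p q := by
  simp only [flipSum, Pi.add_apply, Pi.sub_apply, Finset.sum_apply]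

lemma flipSum_mem {S : AddSubgroup M} {F : ℕ → ℕ → M} {d m p q : ℕ}
    (hpq : p + q + 2 ≤ d) (hp : p < m) (hq : q + m + 1 ≤ d)
    (hF : ∀ s t, p < s → q < t → BidIdx d m (s - 1, t - 1) → F s t ∈ S) :
    flipSum F d m p q ∈ S := by
  refine add_mem (add_mem (add_mem (sub_mem ?_ ?_) ?_) (sum_mem fun r hr => sub_mem ?_ ?_))
    (sum_mem fun r hr => sub_mem ?_ ?_)
  all_goals
    try rw [mem_Icc] at hr
    exact hF _ _ (by omega) (by omega) (by simp only [BidIdx]; omega)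

lemma flipSum_mul_eq_ite {R : Type*} [CommRing R] {d m p q k l : ℕ}
    (hpq : p + q + 2 ≤ d) (hp : p < m) (hq : q + m + 1 ≤ d) (hkl : BidIdx d m (k, l))
    {a b : ℕ → R} (ha : ∀ s, p < s → k < s → a s = if k = p then 1 else 0)
    (hb : ∀ t, q < t → l < t → b t = if l = q then 1 else 0) :
    flipSum (fun s t => a s * b t) d m p q = if (k, l) = (p, q) then 1 else 0 := by
  set δ : R := if l = q then 1 else 0
  have hkl' : k + l ≤ d ∧ (m < k → k + l < d) := by simp only [BidIdx] at hkl; omega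
  have hstep : ∀ s t, p < s → q < t → k < s ∨ l < t →
      (a (s + 1) - a s) * b t = (a (s + 1) - a s) * δ := by
    rintro s t hs ht (hks | hlt)
    · rw [ha s hs hks, ha (s + 1) (by omega) (by omega), sub_self, zero_mul, zero_mul]
    · rw [hb t ht hlt]
  have hfirst : a (p + 1) * b (d - p + 1) = a (p + 1) * δ := by
    rcases lt_or_ge k p with hkp | hkp
    · rw [ha (p + 1) (by omega) (by omega), if_neg hkp.ne, zero_mul, zero_mul]
    · rw [hb _ (by omega) (by omega)]
  have htel : ∀ i j, i ≤ j + 1 →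
      ∑ r ∈ Icc i j, (a (p + r + 2) - a (p + r + 1)) = a (p + j + 2) - a (p + i + 1) := by
    intro i j hij
    rw [← Ico_add_one_right_eq_Icc]
    exact Finset.sum_Ico_sub (fun r => a (p + r + 1)) hij
  calc flipSum (fun s t => a s * b t) d m p q
      = a (p + 1) * b (d - p + 1) + (a (p + 2) - a (p + 1)) * b (d - p)
        + ∑ r ∈ Icc 1 (m - p - 1), (a (p + r + 2) - a (p + r + 1)) * b (d - p - r)
        + ∑ r ∈ Icc (m - p) (d - p - q - 2),
            (a (p + r + 2) - a (p + r + 1)) * b (d - p - r - 1) := by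
        simp only [flipSum, sub_mul]
        ring
    _ = a (p + 1) * δ + (a (p + 2) - a (p + 1)) * δ
        + ∑ r ∈ Icc 1 (m - p - 1), (a (p + r + 2) - a (p + r + 1)) * δ
        + ∑ r ∈ Icc (m - p) (d - p - q - 2), (a (p + r + 2) - a (p + r + 1)) * δ := by
        rw [hfirst, hstep _ _ (by omega) (by omega) (by omega)]
        congr 1
        · congr 1
          refine sum_congr rfl fun r hr => ?_
          rw [mem_Icc] at hr
          exact hstep _ _ (by omega) (by omega) (by omega)
        · refine sum_congr rfl fun r hr => ?_
          rw [mem_Icc] at hr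
          exact hstep _ _ (by omega) (by omega) (by omega)
    _ = a (d - q) * δ := by
        simp only [← sum_mul, ← add_mul]
        rw [htel 1 (m - p - 1) (by omega), htel (m - p) (d - p - q - 2) (by omega),
          show p + (m - p - 1) + 2 = p + (m - p) + 1 by omega,
          show p + (d - p - q - 2) + 2 = d - q by omega]
        ring
    _ = if (k, l) = (p, q) then 1 else 0 := by
        by_cases hlq : l = q
        · subst hlq
          rw [ha (d - l) (by omega) (by omega)]
          simp [δ]
        · simp [δ, hlq]

end FlipSum

end BivariateInterpolation

open BivariateInterpolation

lemma isLowerSet_bidIdx (d m : ℕ) : IsLowerSet {x : ℕ × ℕ | BidIdx d m x} := by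
  rintro ⟨a, b⟩ ⟨k, l⟩ ⟨hk, hl⟩ (h : BidIdx d m (a, b))
  show BidIdx d m (k, l)
  simp only [BidIdx] at *
  omega

lemma polySpace_eq_span (d m : ℕ) :
    PolySpace d m =
      Submodule.span ℂ ((fun x => evalMul (X ^ x.1) (X ^ x.2)) '' {x | BidIdx d m x}) := by
  rw [PolySpace]
  congr 1
  ext f
  constructor
  · rintro ⟨k, l, h, rfl⟩
    exact ⟨(k, l), h, by ext; simp⟩
  · rintro ⟨⟨k, l⟩, h, rfl⟩
    exact ⟨k, l, h, by ext; simp⟩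

lemma evalMul_mem_polySpace {d m a b : ℕ} (h : BidIdx d m (a, b)) {P Q : ℂ[X]}
    (hP : P.natDegree ≤ a) (hQ : Q.natDegree ≤ b) : evalMul P Q ∈ PolySpace d m := by
  rw [polySpace_eq_span]
  exact evalMul_mem_span_image (isLowerSet_bidIdx d m) h (mem_span_X_pow_of_natDegree_le hP)
    (mem_span_X_pow_of_natDegree_le hQ)

lemma eq_zero_of_mem_polySpace {η θ : ℕ → ℂ} (hη : η.Injective) (hθ : θ.Injective) {d m : ℕ}
    {f : ℂ × ℂ → ℂ} (hf : f ∈ PolySpace d m)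
    (h0 : ∀ k l, BidIdx d m (k, l) → f (η k, θ l) = 0) : f = 0 := by
  rw [polySpace_eq_span] at hf
  exact eq_zero_of_mem_span_newtonFun hη hθ
    (span_monomial_le_span_newtonFun η θ (isLowerSet_bidIdx d m) hf) fun x hx => h0 x.1 x.2 hx

lemma IsFLIP.unique {η θ : ℕ → ℂ} (hη : η.Injective) (hθ : θ.Injective) {d m p q : ℕ}
    {L L' : ℂ × ℂ → ℂ} (hL : IsFLIP η θ d m p q L) (hL' : IsFLIP η θ d m p q L') : L = L' := by
  refine sub_eq_zero.1 (eq_zero_of_mem_polySpace hη hθ (sub_mem hL.1 hL'.1) fun k l hkl => ?_)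
  by_cases h : (k, l) = (p, q)
  · obtain ⟨rfl, rfl⟩ := Prod.mk.inj h
    simp [hL.2.1, hL'.2.1]
  · simp [hL.2.2 k l hkl h, hL'.2.2 k l hkl h]

lemma lagrangeProd_mem_polySpace {η θ : ℕ → ℂ} (hη : η.Injective) (hθ : θ.Injective)
    {d m p q s t : ℕ} (hs : p < s) (ht : q < t) (h : BidIdx d m (s - 1, t - 1)) :
    lagrangeProd η θ p q s t ∈ PolySpace d m := by
  refine evalMul_mem_polySpace h ?_ ?_
  · rw [Lagrange.natDegree_basis hη.injOn (mem_range.2 hs), card_range]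
  · rw [Lagrange.natDegree_basis hθ.injOn (mem_range.2 ht), card_range]

lemma isFLIP_flipSum_lagrangeProd {η θ : ℕ → ℂ} (hη : η.Injective) (hθ : θ.Injective)
    {d m p q : ℕ} (hpq : p + q + 2 ≤ d) (hp : p < m) (hq : q + m + 1 ≤ d) :
    IsFLIP η θ d m p q (flipSum (lagrangeProd η θ p q) d m p q) := by
  have hnode : ∀ k l, BidIdx d m (k, l) →
      flipSum (lagrangeProd η θ p q) d m p q (η k, θ l) = if (k, l) = (p, q) then 1 else 0 :=
    fun k l hkl => (flipSum_apply _ _ _ _ _ _).trans <| flipSum_mul_eq_ite hpq hp hq hkl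
      (fun _ hs hk => eval_basis_range_of_lt hη hs hk)
      (fun _ ht hl => eval_basis_range_of_lt hθ ht hl)
  refine ⟨flipSum_mem (S := (PolySpace d m).toAddSubgroup) hpq hp hq
    fun s t hs ht h => lagrangeProd_mem_polySpace hη hθ hs ht h, ?_, fun k l hkl h => ?_⟩
  · simpa using hnode p q (Or.inl (by omega))
  · simpa [h] using hnode k l hkl

theorem statement13_general (η θ : ℕ → ℂ)
    (hη : Function.Injective η) (hθ : Function.Injective θ)
    (d m : ℕ)
    (p q : ℕ) (hpq : p + q + 2 ≤ d) (hp : p < m) (hq : q + m + 1 ≤ d) :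
    ∀ L : (ℂ × ℂ) → ℂ, IsFLIP η θ d m p q L →
      ∀ z w : ℂ,
        L (z, w) =
          (∏ i ∈ range p, (z - η i) / (η p - η i)) *
              (∏ j ∈ (range (d - p + 1)).erase q, (w - θ j) / (θ q - θ j))
            - (∏ i ∈ range p, (z - η i) / (η p - η i)) *
                (∏ j ∈ (range (d - p)).erase q, (w - θ j) / (θ q - θ j))
            + (∏ i ∈ (range (p + 2)).erase p, (z - η i) / (η p - η i)) *
                (∏ j ∈ (range (d - p)).erase q, (w - θ j) / (θ q - θ j))
            + (∑ r ∈ Finset.Icc 1 (m - p - 1),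
                ((∏ i ∈ (range (p + r + 2)).erase p, (z - η i) / (η p - η i)) *
                    (∏ j ∈ (range (d - p - r)).erase q, (w - θ j) / (θ q - θ j))
                  - (∏ i ∈ (range (p + r + 1)).erase p, (z - η i) / (η p - η i)) *
                      (∏ j ∈ (range (d - p - r)).erase q, (w - θ j) / (θ q - θ j))))
            + (∑ r ∈ Finset.Icc (m - p) (d - p - q - 2),
                ((∏ i ∈ (range (p + r + 2)).erase p, (z - η i) / (η p - η i)) *
                    (∏ j ∈ (range (d - p - r - 1)).erase q, (w - θ j) / (θ q - θ j))
                  - (∏ i ∈ (range (p + r + 1)).erase p, (z - η i) / (η p - η i)) *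
                      (∏ j ∈ (range (d - p - r - 1)).erase q,
                        (w - θ j) / (θ q - θ j)))) := by
  intro L hL z w
  rw [hL.unique hη hθ (isFLIP_flipSum_lagrangeProd hη hθ hpq hp hq), flipSum_apply]
  simp only [flipSum, lagrangeProd, evalMul_apply, eval_basis_eq_prod]
  rw [range_add_one (n := p), erase_insert notMem_range_self]

/-- in the bidimensional intertwining setting, for a point
`(η_p, θ_q) ∈ Ω_N` with `p+q ≤ d−2`, `0 ≤ p ≤ m−1` and `0 ≤ q ≤ d−m−1`,
the FLIP is given by the explicit formula with two correcting sums. -/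
theorem statement13 (η θ : ℕ → ℂ)
    (hη : Function.Injective η) (hθ : Function.Injective θ)
    (N d m : ℕ) (hN : 1 ≤ N)
    (hlow : d * (d + 1) / 2 < N) (hhigh : N ≤ (d + 1) * (d + 2) / 2)
    (hm : N = d * (d + 1) / 2 + 1 + m)
    (p q : ℕ) (hpq : p + q + 2 ≤ d) (hp : p < m) (hq : q + m + 1 ≤ d) :
    ∀ L : (ℂ × ℂ) → ℂ, IsFLIP η θ d m p q L →
      ∀ z w : ℂ,
        L (z, w) =
          (∏ i ∈ range p, (z - η i) / (η p - η i)) *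
              (∏ j ∈ (range (d - p + 1)).erase q, (w - θ j) / (θ q - θ j))
            - (∏ i ∈ range p, (z - η i) / (η p - η i)) *
                (∏ j ∈ (range (d - p)).erase q, (w - θ j) / (θ q - θ j))
            + (∏ i ∈ (range (p + 2)).erase p, (z - η i) / (η p - η i)) *
                (∏ j ∈ (range (d - p)).erase q, (w - θ j) / (θ q - θ j))
            + (∑ r ∈ Finset.Icc 1 (m - p - 1),
                ((∏ i ∈ (range (p + r + 2)).erase p, (z - η i) / (η p - η i)) *
                    (∏ j ∈ (range (d - p - r)).erase q, (w - θ j) / (θ q - θ j))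
                  - (∏ i ∈ (range (p + r + 1)).erase p, (z - η i) / (η p - η i)) *
                      (∏ j ∈ (range (d - p - r)).erase q, (w - θ j) / (θ q - θ j))))
            + (∑ r ∈ Finset.Icc (m - p) (d - p - q - 2),
                ((∏ i ∈ (range (p + r + 2)).erase p, (z - η i) / (η p - η i)) *
                    (∏ j ∈ (range (d - p - r - 1)).erase q, (w - θ j) / (θ q - θ j))
                  - (∏ i ∈ (range (p + r + 1)).erase p, (z - η i) / (η p - η i)) *
                      (∏ j ∈ (range (d - p - r - 1)).erase q,
                        (w - θ j) / (θ q - θ j)))) :=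
  statement13_general η θ hη hθ d m p q hpq hp hq
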